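/- Let s ∈ (0,1), let H ⊂ ℝ^N be an open halfspace with reflection Q across ∂H, and let v : ℝ^N → ℝ be measurable, antisymmetric (v(Q(x)) = -v(x) for all x), and satisfy v ≥ 0 a.e. in H ∖ U for an open bounded U ⊂ H. Set w := χ_H v⁻. Then, whenever the integrals converge absolutely, ∬_{ℝ^{2N}} [(w(x)-w(y))² + (v(x)-v(y))(w(x)-w(y))] / |x-y|^{N+2s} dx dy ≤ 0. -/

import Mathlib

/-!
Since `w = χ_H v⁻` satisfies `w (v + w) = 0`, the integrand equals `-g (x, y)` with
`g (x, y) = (w x (v + w) y + w y (v + w) x) / |x - y| ^ (N + 2s)`. The reflection `Q` preserves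
Lebesgue measure, so `∫ g` is a quarter of the integral of
`g (x, y) + g (Q x, y) + g (x, Q y) + g (Q x, Q y)`, and it suffices that this sum is nonnegative.
It is invariant under `x ↦ Q x` and `y ↦ Q y`, so we may take `x, y` in the closed halfspace
(on `∂H` antisymmetry forces `v = 0`). There, with `a = v x`, `b = v y` and `K` the kernel, it is
`(a⁻ b⁺ + b⁻ a⁺) (K (x - y) - K (x - Q y)) + 2 a⁻ b⁻ K (x - Q y) ≥ 0`,
because `|x - y| ≤ |x - Q y|`.
-/

open MeasureTheory RealInnerProductSpace

section Symmetrization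

variable {β : Type*}

def reflectSum (Q : β → β) (f : β → β → ℝ) (x y : β) : ℝ :=
  f x y + f (Q x) y + f x (Q y) + f (Q x) (Q y)

theorem reflectSum_apply_left {Q : β → β} (hQ : Function.Involutive Q) (f : β → β → ℝ)
    (x y : β) : reflectSum Q f (Q x) y = reflectSum Q f x y := by
  simp only [reflectSum, hQ x]
  ring

theorem reflectSum_apply_right {Q : β → β} (hQ : Function.Involutive Q) (f : β → β → ℝ)
    (x y : β) : reflectSum Q f x (Q y) = reflectSum Q f x y := by
  simp only [reflectSum, hQ y]
  ring

variable [MeasurableSpace β] {μ : Measure β}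

theorem integral_nonneg_of_integral_add_comp_nonneg {T : β → β} (hT : MeasurePreserving T μ μ)
    (hTe : MeasurableEmbedding T) {f : β → ℝ} (h : 0 ≤ ∫ z, (f z + f (T z)) ∂μ) :
    0 ≤ ∫ z, f z ∂μ := by
  by_cases hf : Integrable f μ
  · have hfT : Integrable (fun z => f (T z)) μ := hT.integrable_comp_of_integrable hf
    rw [integral_add hf hfT, hT.integral_comp hTe] at h
    linarith
  · rw [integral_undef hf]

theorem integral_prod_nonneg_of_reflectSum_nonneg [SFinite μ] {Q : β → β}
    (hQ : MeasurePreserving Q μ μ) (hQe : MeasurableEmbedding Q) {f : β → β → ℝ}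
    (hf : ∀ x y, 0 ≤ reflectSum Q f x y) : 0 ≤ ∫ z, f z.1 z.2 ∂μ.prod μ := by
  have hid := MeasurePreserving.id μ
  refine integral_nonneg_of_integral_add_comp_nonneg (hQ.prod hid)
    (hQe.prodMap MeasurableEmbedding.id) ?_
  refine integral_nonneg_of_integral_add_comp_nonneg (hid.prod hQ)
    (MeasurableEmbedding.id.prodMap hQe) ?_
  refine integral_nonneg fun z => show 0 ≤ _ from ?_
  simpa only [reflectSum, Prod.map_fst, Prod.map_snd, id_eq, add_assoc] using hf z.1 z.2

end Symmetrization

theorem add_negPart_eq_posPart {α : Type*} [Lattice α] [AddGroup α] [AddLeftMono α] (a : α) :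
    a + a⁻ = a⁺ :=
  (sub_eq_iff_eq_add.1 (posPart_sub_negPart a)).symm

theorem negPart_mul_posPart_eq_zero {α : Type*} [Ring α] [LinearOrder α] [IsOrderedRing α]
    (a : α) : a⁻ * a⁺ = 0 := by
  rcases le_total a 0 with h | h
  · rw [posPart_eq_zero.2 h, mul_zero]
  · rw [negPart_eq_zero.2 h, zero_mul]

theorem indicator_negPart_mul_add_self {X : Type*} (s : Set X) (v : X → ℝ) (x : X) :
    s.indicator (fun x => (v x)⁻) x * (v x + s.indicator (fun x => (v x)⁻) x) = 0 := by
  by_cases hx : x ∈ s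
  · rw [Set.indicator_of_mem hx, add_negPart_eq_posPart, negPart_mul_posPart_eq_zero]
  · rw [Set.indicator_of_notMem hx, zero_mul]

theorem negPart_cross_sub_nonneg {a b D₁ D₂ : ℝ} (hD₁ : 0 ≤ D₁) (hD : D₁ ≤ D₂)
    (hpos : 0 < D₁ ∨ a = b) :
    0 ≤ (a⁻ * b⁺ + b⁻ * a⁺) / D₁ - (a⁻ * b + b⁻ * a) / D₂ := by
  have hsplit : -(a⁻ * b + b⁻ * a) = 2 * (a⁻ * b⁻) - (a⁻ * b⁺ + b⁻ * a⁺) := by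
    linear_combination a⁻ * posPart_sub_negPart b + b⁻ * posPart_sub_negPart a
  have hD₂ : 0 ≤ D₂ := hD₁.trans hD
  have hcross : 0 ≤ a⁻ * b⁺ + b⁻ * a⁺ := by positivity
  have hsame : 0 ≤ 2 * (a⁻ * b⁻) / D₂ := by positivity
  rw [sub_eq_add_neg, ← neg_div, hsplit, sub_div]
  rcases hpos with hD₁ | rfl
  · have := div_le_div_of_nonneg_left hcross hD₁ hD
    linarith
  · rw [negPart_mul_posPart_eq_zero, add_zero, zero_div, zero_div]
    linarith

variable {E : Type*} [NormedAddCommGroup E] [InnerProductSpace ℝ E]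

def hyperplaneReflection (p ν y : E) : E := y - (2 * ⟪y - p, ν⟫) • ν

def openHalfspace (p ν : E) : Set E := {x | 0 < ⟪x - p, ν⟫}

namespace hyperplaneReflection

variable {p ν : E}

theorem inner_apply_sub (hν : ‖ν‖ = 1) (y : E) :
    ⟪hyperplaneReflection p ν y - p, ν⟫ = -⟪y - p, ν⟫ := by
  rw [hyperplaneReflection, sub_right_comm, inner_sub_left, real_inner_smul_left,
    real_inner_self_eq_norm_sq, hν]
  ring

theorem involutive (hν : ‖ν‖ = 1) : Function.Involutive (hyperplaneReflection p ν) := by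
  intro y
  rw [hyperplaneReflection, inner_apply_sub hν, hyperplaneReflection]
  module

theorem apply_eq_self_of_inner_eq_zero {y : E} (hy : ⟪y - p, ν⟫ = 0) :
    hyperplaneReflection p ν y = y := by
  simp [hyperplaneReflection, hy]

theorem norm_sub_apply_sq (hν : ‖ν‖ = 1) (x y : E) :
    ‖x - hyperplaneReflection p ν y‖ ^ 2 =
      ‖x - y‖ ^ 2 + 4 * ⟪x - p, ν⟫ * ⟪y - p, ν⟫ := by
  have hxy : ⟪x - y, ν⟫ = ⟪x - p, ν⟫ - ⟪y - p, ν⟫ := by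
    rw [← inner_sub_left, sub_sub_sub_cancel_right]
  rw [hyperplaneReflection, sub_sub_eq_add_sub, add_sub_right_comm, norm_add_sq_real,
    real_inner_smul_right, hxy, norm_smul, hν, Real.norm_eq_abs, mul_one, sq_abs]
  ring

theorem norm_apply_sub_eq_norm_sub_apply (hν : ‖ν‖ = 1) (x y : E) :
    ‖hyperplaneReflection p ν x - y‖ = ‖x - hyperplaneReflection p ν y‖ := by
  rw [norm_sub_rev, ← sq_eq_sq₀ (norm_nonneg _) (norm_nonneg _), norm_sub_apply_sq hν,
    norm_sub_apply_sq hν, norm_sub_rev]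
  ring

theorem norm_sub_le_norm_sub_apply (hν : ‖ν‖ = 1) {x y : E} (hx : 0 ≤ ⟪x - p, ν⟫)
    (hy : 0 ≤ ⟪y - p, ν⟫) : ‖x - y‖ ≤ ‖x - hyperplaneReflection p ν y‖ := by
  rw [← sq_le_sq₀ (norm_nonneg _) (norm_nonneg _), norm_sub_apply_sq hν]
  nlinarith

theorem apply_eq_add_reflection (hν : ‖ν‖ = 1) (y : E) :
    hyperplaneReflection p ν y = p + Submodule.reflection (ℝ ∙ ν)ᗮ (y - p) := by
  rw [Submodule.reflection_apply, Submodule.starProjection_orthogonal_val,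
    Submodule.starProjection_singleton, real_inner_comm, hν, hyperplaneReflection]
  module

variable [FiniteDimensional ℝ E] [MeasurableSpace E] [BorelSpace E]

theorem measurePreserving (hν : ‖ν‖ = 1) :
    MeasurePreserving (hyperplaneReflection p ν) volume volume := by
  rw [funext (apply_eq_add_reflection hν)]
  exact (measurePreserving_add_left volume p).comp
    ((Submodule.reflection (ℝ ∙ ν)ᗮ).measurePreserving.comp
      (measurePreserving_sub_right volume p))

theorem measurableEmbedding (hν : ‖ν‖ = 1) :
    MeasurableEmbedding (hyperplaneReflection p ν) :=
  (MeasurableEquiv.ofInvolutive _ (involutive hν)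
    (measurePreserving hν).measurable).measurableEmbedding

end hyperplaneReflection

section CrossKernel

variable {p ν : E} {v w : E → ℝ} {α : ℝ}

noncomputable def crossKernel (v w : E → ℝ) (α : ℝ) (x y : E) : ℝ :=
  (w x * (v y + w y) + w y * (v x + w x)) / ‖x - y‖ ^ α

theorem indicator_negPart_apply_of_inner_nonneg (hν : ‖ν‖ = 1)
    (hv : ∀ x, v (hyperplaneReflection p ν x) = -v x)
    (hw : w = (openHalfspace p ν).indicator fun x => (v x)⁻) {x : E}
    (hx : 0 ≤ ⟪x - p, ν⟫) :
    w x = (v x)⁻ ∧ w (hyperplaneReflection p ν x) = 0 := by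
  subst hw
  constructor
  · rcases hx.lt_or_eq with hx | hx
    · exact Set.indicator_of_mem (show x ∈ openHalfspace p ν from hx) _
    · have hvx : v x = 0 := by
        have := hv x
        rw [hyperplaneReflection.apply_eq_self_of_inner_eq_zero hx.symm] at this
        linarith
      rw [Set.indicator_of_notMem (fun h : x ∈ openHalfspace p ν => h.ne hx), hvx, negPart_zero]
  · refine Set.indicator_of_notMem (fun h : _ ∈ openHalfspace p ν => ?_) _
    have h' : 0 < ⟪hyperplaneReflection p ν x - p, ν⟫ := h
    rw [hyperplaneReflection.inner_apply_sub hν] at h'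
    linarith

theorem reflectSum_crossKernel_nonneg_of_inner_nonneg (hν : ‖ν‖ = 1) (hα : 0 ≤ α)
    (hv : ∀ x, v (hyperplaneReflection p ν x) = -v x)
    (hw : w = (openHalfspace p ν).indicator fun x => (v x)⁻) {x y : E}
    (hx : 0 ≤ ⟪x - p, ν⟫) (hy : 0 ≤ ⟪y - p, ν⟫) :
    0 ≤ reflectSum (hyperplaneReflection p ν) (crossKernel v w α) x y := by
  set R := hyperplaneReflection p ν
  obtain ⟨hwx, hwRx⟩ := indicator_negPart_apply_of_inner_nonneg hν hv hw hx
  obtain ⟨hwy, hwRy⟩ := indicator_negPart_apply_of_inner_nonneg hν hv hw hy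
  have hD : ‖x - y‖ ^ α ≤ ‖x - R y‖ ^ α :=
    Real.rpow_le_rpow (norm_nonneg _)
      (hyperplaneReflection.norm_sub_le_norm_sub_apply hν hx hy) hα
  -- On the diagonal `‖x - y‖ ^ α = 0` and `_ / 0 = 0`, but there the cross term vanishes.
  have hpos : 0 < ‖x - y‖ ^ α ∨ v x = v y := by
    rcases eq_or_ne x y with rfl | hne
    · exact Or.inr rfl
    · exact Or.inl (Real.rpow_pos_of_pos (norm_pos_iff.2 (sub_ne_zero.2 hne)) α)
  convert negPart_cross_sub_nonneg (by positivity) hD hpos using 1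
  simp only [reflectSum, crossKernel, hwx, hwRx, hwy, hwRy, hv,
    hyperplaneReflection.norm_apply_sub_eq_norm_sub_apply hν, R]
  rw [add_negPart_eq_posPart, add_negPart_eq_posPart]
  ring

theorem reflectSum_crossKernel_nonneg (hν : ‖ν‖ = 1) (hα : 0 ≤ α)
    (hv : ∀ x, v (hyperplaneReflection p ν x) = -v x)
    (hw : w = (openHalfspace p ν).indicator fun x => (v x)⁻) (x y : E) :
    0 ≤ reflectSum (hyperplaneReflection p ν) (crossKernel v w α) x y := by
  have hR := hyperplaneReflection.involutive (p := p) hν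
  have key {x y : E} (hx : 0 ≤ ⟪x - p, ν⟫) (hy : 0 ≤ ⟪y - p, ν⟫) :=
    reflectSum_crossKernel_nonneg_of_inner_nonneg (α := α) hν hα hv hw hx hy
  have hflip (z : E) :
      0 ≤ ⟪z - p, ν⟫ ∨ 0 ≤ ⟪hyperplaneReflection p ν z - p, ν⟫ := by
    rw [hyperplaneReflection.inner_apply_sub hν, neg_nonneg]
    exact le_total _ _
  rcases hflip x with hx | hx <;> rcases hflip y with hy | hy
  · exact key hx hy
  · rw [← reflectSum_apply_right hR]
    exact key hx hy
  · rw [← reflectSum_apply_left hR]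
    exact key hx hy
  · rw [← reflectSum_apply_left hR, ← reflectSum_apply_right hR]
    exact key hx hy

end CrossKernel

theorem stmt12_general (N : ℕ) (s : ℝ) (hs : s ∈ Set.Ioo (0 : ℝ) 1)
    (p ν : EuclideanSpace ℝ (Fin N)) (hν : ‖ν‖ = 1)
    (H : Set (EuclideanSpace ℝ (Fin N)))
    (hH : H = {x | (0:ℝ) < inner ℝ (x - p) ν})
    (Q : EuclideanSpace ℝ (Fin N) → EuclideanSpace ℝ (Fin N))
    (hQ : ∀ y, Q y = y - (2 * inner ℝ (y - p) ν : ℝ) • ν)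
    (v : EuclideanSpace ℝ (Fin N) → ℝ)
    (hanti : ∀ x, v (Q x) = -v x)
    (w : EuclideanSpace ℝ (Fin N) → ℝ)
    (hw : w = H.indicator (fun x => max (-v x) 0)) :
    (∫ q : EuclideanSpace ℝ (Fin N) × EuclideanSpace ℝ (Fin N),
      ((w q.1 - w q.2) ^ 2 + (v q.1 - v q.2) * (w q.1 - w q.2)) /
        ‖q.1 - q.2‖ ^ ((N : ℝ) + 2 * s)) ≤ 0 := by
  have hα : 0 ≤ (N : ℝ) + 2 * s := by linarith [hs.1, N.cast_nonneg (α := ℝ)]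
  obtain rfl : Q = hyperplaneReflection p ν := funext hQ
  obtain rfl : H = openHalfspace p ν := hH
  replace hw : w = (openHalfspace p ν).indicator fun x => (v x)⁻ := hw
  have hself : ∀ x, w x * (v x + w x) = 0 := fun x => hw ▸ indicator_negPart_mul_add_self _ v x
  have hpair (x y) :
      ((w x - w y) ^ 2 + (v x - v y) * (w x - w y)) / ‖x - y‖ ^ ((N : ℝ) + 2 * s) =
        -crossKernel v w ((N : ℝ) + 2 * s) x y := by
    rw [crossKernel, ← neg_div]
    congr 1
    linear_combination hself x + hself y
  simp_rw [hpair, integral_neg, neg_nonpos]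
  exact integral_prod_nonneg_of_reflectSum_nonneg (hyperplaneReflection.measurePreserving hν)
    (hyperplaneReflection.measurableEmbedding hν) (reflectSum_crossKernel_nonneg hν hα hanti hw)

/-- let `H` be an open halfspace with reflection `Q` across `∂H`, `v` measurable
and antisymmetric with `v ≥ 0` a.e. in `H ∖ U` for an open bounded `U ⊂ H`, and
`w := χ_H v⁻`. Then, whenever the integrands are absolutely integrable,
`∬ [(w(x)-w(y))² + (v(x)-v(y))(w(x)-w(y))]/|x-y|^{N+2s} ≤ 0`. -/
theorem stmt12 (N : ℕ) (s : ℝ) (hs : s ∈ Set.Ioo (0 : ℝ) 1)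
    (p ν : EuclideanSpace ℝ (Fin N)) (hν : ‖ν‖ = 1)
    (H : Set (EuclideanSpace ℝ (Fin N)))
    (hH : H = {x | (0:ℝ) < inner ℝ (x - p) ν})
    (Q : EuclideanSpace ℝ (Fin N) → EuclideanSpace ℝ (Fin N))
    (hQ : ∀ y, Q y = y - (2 * inner ℝ (y - p) ν : ℝ) • ν)
    (U : Set (EuclideanSpace ℝ (Fin N))) (hUo : IsOpen U)
    (hUb : Bornology.IsBounded U) (hUH : U ⊆ H)
    (v : EuclideanSpace ℝ (Fin N) → ℝ) (hv : Measurable v)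
    (hanti : ∀ x, v (Q x) = -v x)
    (hpos : ∀ᵐ x ∂volume, x ∈ H \ U → 0 ≤ v x)
    (w : EuclideanSpace ℝ (Fin N) → ℝ)
    (hw : w = H.indicator (fun x => max (-v x) 0))
    (hint1 : Integrable (fun q : EuclideanSpace ℝ (Fin N) × EuclideanSpace ℝ (Fin N) =>
      (w q.1 - w q.2) ^ 2 / ‖q.1 - q.2‖ ^ ((N : ℝ) + 2 * s)) volume)
    (hint2 : Integrable (fun q : EuclideanSpace ℝ (Fin N) × EuclideanSpace ℝ (Fin N) =>
      (v q.1 - v q.2) * (w q.1 - w q.2) / ‖q.1 - q.2‖ ^ ((N : ℝ) + 2 * s)) volume) :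
    (∫ q : EuclideanSpace ℝ (Fin N) × EuclideanSpace ℝ (Fin N),
      ((w q.1 - w q.2) ^ 2 + (v q.1 - v q.2) * (w q.1 - w q.2)) /
        ‖q.1 - q.2‖ ^ ((N : ℝ) + 2 * s)) ≤ 0 :=
  stmt12_general N s hs p ν hν H hH Q hQ v hanti w hw
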